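/- arXiv:1409.1833 — 2 statements merged into one kernel-verified Lean document; each statement's English description precedes it below -/
import Mathlib

section
/- Let (p,q) be a non-strict pair in X. For every real number c with 0 < c ≤ φ(s_t − p), there is exactly one point z ∈ bisec(p,q) with φ(z − p) = c. (Equivalently: every translate of the line through p and q lying strictly above that line and not above the translate through s_t intersects bisec(p,q) in exactly one point.) -/
/-!
Parametrize the level line `φ(z - p) = c` as `z = q + c • u' + s • (q - p)`; then `z` lies on the
bisector iff `d (s + 1) = d s` for the convex function `d s = ‖c • u' + s • (q - p)‖`. Since
`φ ≤ ‖·‖`, `d ≥ c = d 0`, so `d` attains its minimum and an intermediate value argument on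
`[-1, 0]` gives a solution. Two solutions `s₁ < s₂` would force `d` to be minimal at `s₁` and
at `s₂ + 1`, i.e. two points of `c • F` at distance `(s₂ + 1 - s₁) ‖q - p‖`; but `c • F` has
length `c ‖u' - u‖ = (c / t) ‖q - p‖ ≤ ‖q - p‖`.
-/

variable {X : Type*} [NormedAddCommGroup X] [NormedSpace ℝ X]

/-- The bisector of two points: all points equidistant from `p` and `q`. -/
def bisec (p q : X) : Set X := {z : X | ‖z - p‖ = ‖z - q‖}

/-- The pair `(p, q)` is strict if the unit sphere contains no nondegenerate
segment parallel to `p - q`. -/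
def strictPair (p q : X) : Prop :=
  ¬ ∃ a b : X, a ≠ b ∧ segment ℝ a b ⊆ {x : X | ‖x‖ = 1} ∧ ∃ t : ℝ, b - a = t • (p - q)

/-- The cone `C(x, φ) = {x + a : φ(a) = ‖a‖}`. -/
def cone (x : X) (φ : X →L[ℝ] ℝ) : Set X := {z : X | φ (z - x) = ‖z - x‖}

open Set

namespace ConvexOn

variable {g : ℝ → ℝ}

lemma isMinOn_of_le_of_le (hg : ConvexOn ℝ univ g) {x y z : ℝ} (hxy : x < y) (hyz : y < z)
    (hx : g x ≤ g y) (hz : g z ≤ g y) : IsMinOn g univ y := by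
  refine isMinOn_univ_iff.mpr fun w => ?_
  rcases le_total w y with hwy | hyw
  · exact hg.le_left_of_right_le'' trivial trivial hwy hyz hz
  · exact hg.le_right_of_left_le'' trivial trivial hxy hyw hx

lemma isMinOn_of_apply_add_one_eq (hg : ConvexOn ℝ univ g) {a b : ℝ} (hab : a < b)
    (ha : g (a + 1) = g a) (hb : g (b + 1) = g b) :
    IsMinOn g univ a ∧ IsMinOn g univ (b + 1) := by
  have hba : g b ≤ g a := hg.le_left_of_right_le'' trivial trivial hab.le (lt_add_one b) hb.le
  have hab' : g (a + 1) ≤ g (b + 1) :=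
    hg.le_right_of_left_le'' trivial trivial (lt_add_one a) (by linarith) ha.ge
  have hmin := isMinOn_univ_iff.mp <|
    hg.isMinOn_of_le_of_le hab (lt_add_one b) (by linarith) hb.le
  exact ⟨isMinOn_univ_iff.mpr fun x => by linarith [hmin x],
    isMinOn_univ_iff.mpr fun x => by linarith [hmin x]⟩

end ConvexOn

lemma IsMinOn.exists_apply_add_one_eq {g : ℝ → ℝ} {m : ℝ} (hm : IsMinOn g univ m)
    (hg : Continuous g) : ∃ s, g (s + 1) = g s := by
  have hivt := intermediate_value_Icc (by linarith : m - 1 ≤ m)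
    ((hg.comp (continuous_add_const 1)).sub hg).continuousOn
  have hm' := isMinOn_univ_iff.mp hm
  obtain ⟨s, -, hs⟩ := hivt (a := 0)
    ⟨by simpa using hm' (m - 1), by simpa using hm' (m + 1)⟩
  exact ⟨s, sub_eq_zero.mp hs⟩

lemma ConvexOn.existsUnique_apply_add_one_eq {g : ℝ → ℝ} (hg : ConvexOn ℝ univ g) {m : ℝ}
    (hm : IsMinOn g univ m)
    (hwidth : ∀ x y, IsMinOn g univ x → IsMinOn g univ y → y - x ≤ 1) :
    ∃! s, g (s + 1) = g s := by
  have hcont : Continuous g := continuousOn_univ.mp (hg.continuousOn isOpen_univ)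
  refine existsUnique_of_exists_of_unique (hm.exists_apply_add_one_eq hcont) ?_
  have hnot_lt : ∀ a b, g (a + 1) = g a → g (b + 1) = g b → ¬ a < b := fun a b ha hb hab => by
    obtain ⟨hmin_a, hmin_b⟩ := hg.isMinOn_of_apply_add_one_eq hab ha hb
    linarith [hwidth a (b + 1) hmin_a hmin_b]
  exact fun a b ha hb => le_antisymm (not_lt.mp (hnot_lt b a hb ha)) (not_lt.mp (hnot_lt a b ha hb))

lemma exists_eq_smul_add_smul {K V : Type*} [Field K] [AddCommGroup V] [Module K V]
    (hdim : Module.finrank K V = 2) (f : V →ₗ[K] K) {e v : V} (he : f e = 1) (hv : f v = 0)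
    (hv0 : v ≠ 0) (x : V) : ∃ s : K, x = f x • e + s • v := by
  have : FiniteDimensional K V := .of_finrank_eq_succ hdim
  have hker : Module.finrank K (LinearMap.ker f) = 1 := by
    have := Module.Dual.finrank_ker_add_one_of_ne_zero (f := f) fun h => by simp [h] at he
    omega
  obtain ⟨s, hs⟩ := (finrank_eq_one_iff_of_nonzero' (⟨v, hv⟩ : LinearMap.ker f)
    fun h => hv0 (congrArg Subtype.val h)).mp hker ⟨x - f x • e, by simp [he]⟩
  have hsv : s • v = x - f x • e := congrArg Subtype.val hs
  exact ⟨s, by rw [hsv]; abel⟩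

lemma convexOn_norm_add_smul (w v : X) : ConvexOn ℝ univ fun s : ℝ => ‖w + s • v‖ :=
  ((convexOn_norm convex_univ).translate_right w).comp_linearMap (LinearMap.id.smulRight v)

lemma apply_le_norm_of_opNorm_le_one {φ : X →L[ℝ] ℝ} (hφ : ‖φ‖ ≤ 1) (x : X) : φ x ≤ ‖x‖ :=
  (le_abs_self _).trans (by simpa using φ.le_of_opNorm_le hφ x)

lemma isMinOn_norm_add_smul_zero {φ : X →L[ℝ] ℝ} (hφ : ‖φ‖ ≤ 1) {w v : X} (hφw : φ w = ‖w‖)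
    (hφv : φ v = 0) : IsMinOn (fun s : ℝ => ‖w + s • v‖) univ 0 :=
  isMinOn_univ_iff.mpr fun s => calc
    ‖w + (0 : ℝ) • v‖ = φ (w + s • v) := by simp [hφw, hφv]
    _ ≤ ‖w + s • v‖ := apply_le_norm_of_opNorm_le_one hφ _

lemma exists_eq_add_smul_of_apply_sub_eq (hdim : Module.finrank ℝ X = 2) {φ : X →L[ℝ] ℝ}
    {p q e z : X} (hpq : p ≠ q) (hφe : φ e = 1) (hφpq : φ (p - q) = 0) {c : ℝ}
    (hz : φ (z - p) = c) : ∃ s : ℝ, z = q + c • e + s • (q - p) := by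
  have hφqp : φ (q - p) = 0 := by rw [← neg_sub, map_neg, hφpq, neg_zero]
  obtain ⟨s, hs⟩ : ∃ s : ℝ, z - p = φ (z - p) • e + s • (q - p) :=
    exists_eq_smul_add_smul hdim φ.toLinearMap hφe hφqp (sub_ne_zero.mpr hpq.symm) (z - p)
  exact ⟨s - 1, by rw [← hz]; linear_combination (norm := module) hs⟩

lemma smul_sub_eq_of_add_smul_eq_add_smul {φ : X →L[ℝ] ℝ} {p q u u' : X} {t t' : ℝ}
    (hφpq : φ (p - q) = 0) (hφu : φ u = 1) (hφu' : φ u' = 1) (hst : p + t • u' = q + t' • u) :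
    t • (u' - u) = q - p := by
  obtain rfl : t = t' := by
    have := congrArg φ hst
    simp only [map_add, map_smul, hφu, hφu', smul_eq_mul, mul_one] at this
    linarith [show φ p - φ q = 0 by rw [← map_sub, hφpq]]
  linear_combination (norm := module) hst

lemma add_smul_sub_mem_bisec_iff (p q w : X) (s : ℝ) :
    q + w + s • (q - p) ∈ bisec p q ↔ ‖w + (s + 1) • (q - p)‖ = ‖w + s • (q - p)‖ := by
  rw [bisec, mem_ofPred_eq, show q + w + s • (q - p) - p = w + (s + 1) • (q - p) by module,
    add_sub_right_comm, add_sub_cancel_left]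

lemma exists_sub_eq_smul_sub_of_face {φ : X →L[ℝ] ℝ} {u u' : X}
    (hface : {x : X | ‖x‖ ≤ 1 ∧ φ x = 1} = segment ℝ u u') {c : ℝ} (hc : 0 < c) {a b : X}
    (ha : ‖a‖ ≤ c) (hφa : φ a = c) (hb : ‖b‖ ≤ c) (hφb : φ b = c) :
    ∃ r ≤ c, b - a = r • (u' - u) := by
  have hscaled : ∀ x : X, ‖x‖ ≤ c → φ x = c →
      ∃ θ ∈ Icc (0 : ℝ) 1, x = c • u + (c * θ) • (u' - u) := by
    intro x hx hφx
    have hmem : c⁻¹ • x ∈ segment ℝ u u' := by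
      rw [← hface]
      refine ⟨?_, by rw [map_smul, hφx, smul_eq_mul, inv_mul_cancel₀ hc.ne']⟩
      rw [norm_smul, Real.norm_of_nonneg (inv_nonneg.2 hc.le)]
      exact inv_mul_le_one_of_le₀ hx hc.le
    rw [segment_eq_image'] at hmem
    obtain ⟨θ, hθ, hθx⟩ := hmem
    exact ⟨θ, hθ, by
      rw [mul_smul, ← smul_add, show u + θ • (u' - u) = c⁻¹ • x from hθx, smul_inv_smul₀ hc.ne']⟩
  obtain ⟨θa, hθa, rfl⟩ := hscaled a ha hφa
  obtain ⟨θb, hθb, rfl⟩ := hscaled b hb hφb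
  exact ⟨c * (θb - θa), mul_le_of_le_one_right hc.le (by linarith [hθa.1, hθb.2]), by module⟩

lemma mul_sub_le_of_norm_add_smul_le {φ : X →L[ℝ] ℝ} {u u' v w : X}
    (hface : {x : X | ‖x‖ ≤ 1 ∧ φ x = 1} = segment ℝ u u') {c t x y : ℝ} (hc : 0 < c)
    (hv : t • (u' - u) = v) (hv0 : v ≠ 0) (hφw : φ w = c) (hφv : φ v = 0)
    (hx : ‖w + x • v‖ ≤ c) (hy : ‖w + y • v‖ ≤ c) : t * (y - x) ≤ c := by
  obtain ⟨r, hrc, hr⟩ := exists_sub_eq_smul_sub_of_face hface hc hx (by simp [hφw, hφv]) hy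
    (by simp [hφw, hφv])
  have hsmul : (t * (y - x)) • v = r • v := calc
    _ = t • (w + y • v - (w + x • v)) := by module
    _ = r • v := by rw [hr, ← hv, smul_comm]
  rwa [smul_left_injective ℝ hv0 hsmul]

theorem bisector_lower_levels_unique_point_general
    (hdim : Module.finrank ℝ X = 2) (p q : X) (hpq : p ≠ q)
    (φ : X →L[ℝ] ℝ) (hφ : ‖φ‖ = 1) (hφpq : φ (p - q) = 0)
    (u u' : X)
    (hface : {x : X | ‖x‖ ≤ 1 ∧ φ x = 1} = segment ℝ u u')
    (s_t : X)
    (hst1 : ∃ t : ℝ, 0 ≤ t ∧ s_t = p + t • u')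
    (hst2 : ∃ t : ℝ, 0 ≤ t ∧ s_t = q + t • u) :
    ∀ c : ℝ, 0 < c → c ≤ φ (s_t - p) →
      ∃! z : X, z ∈ bisec p q ∧ φ (z - p) = c := by
  intro c hc hct
  obtain ⟨-, hφu⟩ : u ∈ {x : X | ‖x‖ ≤ 1 ∧ φ x = 1} := hface ▸ left_mem_segment ℝ u u'
  obtain ⟨hu', hφu'⟩ : u' ∈ {x : X | ‖x‖ ≤ 1 ∧ φ x = 1} := hface ▸ right_mem_segment ℝ u u'
  obtain ⟨t, -, rfl⟩ := hst1
  obtain ⟨t', -, hst⟩ := hst2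
  have hv : t • (u' - u) = q - p := smul_sub_eq_of_add_smul_eq_add_smul hφpq hφu hφu' hst
  have ht : c ≤ t := by simpa [hφu'] using hct
  have hφv : φ (q - p) = 0 := by rw [← neg_sub, map_neg, hφpq, neg_zero]
  have hcu' : ‖c • u'‖ = c := by
    rw [norm_smul, le_antisymm hu' (hφu' ▸ apply_le_norm_of_opNorm_le_one hφ.le u'),
      Real.norm_of_nonneg hc.le, mul_one]
  set d : ℝ → ℝ := fun s => ‖c • u' + s • (q - p)‖
  have hmin : IsMinOn d univ 0 := isMinOn_norm_add_smul_zero hφ.le (by simp [hφu', hcu']) hφv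
  have hwidth : ∀ x y, IsMinOn d univ x → IsMinOn d univ y → y - x ≤ 1 := fun x y hx hy => by
    have hle : ∀ s, IsMinOn d univ s → d s ≤ c := fun s hs => by
      simpa [d, hcu'] using isMinOn_univ_iff.mp hs 0
    have := mul_sub_le_of_norm_add_smul_le hface hc hv (sub_ne_zero.mpr hpq.symm)
      (by simp [hφu']) hφv (hle x hx) (hle y hy)
    exact le_of_mul_le_mul_left (by linarith : t * (y - x) ≤ t * 1) (hc.trans_le ht)
  obtain ⟨s, hs, hs_unique⟩ :=
    (convexOn_norm_add_smul (c • u') (q - p)).existsUnique_apply_add_one_eq hmin hwidth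
  refine ⟨q + c • u' + s • (q - p), ⟨(add_smul_sub_mem_bisec_iff p q _ s).mpr hs, ?_⟩, ?_⟩
  · rw [show q + c • u' + s • (q - p) - p = c • u' + (s + 1) • (q - p) by module]
    simp [hφu', hφv]
  · rintro z ⟨hz, hzc⟩
    obtain ⟨r, rfl⟩ := exists_eq_add_smul_of_apply_sub_eq hdim hpq hφu' hφpq hzc
    rw [hs_unique r ((add_smul_sub_mem_bisec_iff p q _ r).mp hz)]

theorem bisector_lower_levels_unique_point
    (hdim : Module.finrank ℝ X = 2) (p q : X) (hpq : p ≠ q)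
    (hns : ¬ strictPair p q)
    (φ : X →L[ℝ] ℝ) (hφ : ‖φ‖ = 1) (hφpq : φ (p - q) = 0)
    (u u' : X) (huu' : u ≠ u')
    (hface : {x : X | ‖x‖ ≤ 1 ∧ φ x = 1} = segment ℝ u u')
    (hlabel : ∃ c : ℝ, 0 < c ∧ u' - u = c • (q - p))
    (s_t : X)
    (hst1 : ∃ t : ℝ, 0 ≤ t ∧ s_t = p + t • u')
    (hst2 : ∃ t : ℝ, 0 ≤ t ∧ s_t = q + t • u) :
    ∀ c : ℝ, 0 < c → c ≤ φ (s_t - p) →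
      ∃! z : X, z ∈ bisec p q ∧ φ (z - p) = c :=
  bisector_lower_levels_unique_point_general hdim p q hpq φ hφ hφpq u u' hface s_t hst1 hst2
end

section
/- Let (p,q) be a strict pair in X and let φ be a norm-one functional with φ(p − q) = 0. Then for every c ∈ ℝ there is exactly one point z ∈ bisec(p,q) with φ(z − p) = c; that is, every straight line parallel to p − q intersects bisec(p,q) exactly once. -/
variable {X : Type*} [NormedAddCommGroup X] [NormedSpace ℝ X]

/-! A line parallel to `p - q` is `t ↦ x + t • (p - q)`, and its point at `t` lies on the
bisector exactly when `g t = g (t + 1)` for the convex function `g t = ‖x - p + t • (p - q)‖`.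
Since `g` grows at both ends, the intermediate value theorem produces a solution. Two solutions
`s < t` force `g` to be constant on `[s, t]`, i.e. a nondegenerate segment parallel to `p - q`
lies on a sphere about the origin; rescaled to the unit sphere, it contradicts strictness. In
dimension two the kernel of `φ` is spanned by `p - q`, so the level sets of `z ↦ φ (z - p)` are
exactly these lines. -/

open Set Module

theorem ConvexOn.eqOn_Icc_of_eq_add {g : ℝ → ℝ} (hg : ConvexOn ℝ univ g) {a b δ : ℝ}
    (hab : a ≤ b) (hδ : 0 < δ) (ha : g a = g (a + δ)) (hb : g b = g (b + δ)) :
    EqOn g (fun _ ↦ g a) (Icc a b) := by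
  have hle_b : ∀ x ∈ Icc a b, g b ≤ g x := by
    rintro x ⟨-, hxb⟩
    rcases hxb.eq_or_lt with rfl | hxb
    · rfl
    refine hg.le_left_of_right_le (mem_univ x) (mem_univ (b + δ)) ?_ hb.ge
    rw [openSegment_eq_Ioo (by linarith)]
    exact ⟨hxb, by linarith⟩
  have ha_le : g a ≤ g b := by
    rcases hab.eq_or_lt with rfl | hab
    · rfl
    calc g a = g (a + δ) := ha
      _ ≤ g (b + δ) := by
        refine hg.le_right_of_left_le (mem_univ a) (mem_univ (b + δ)) ?_ ha.le
        rw [openSegment_eq_Ioo (by linarith)]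
        exact ⟨by linarith, by linarith⟩
      _ = g b := hb.symm
  have hab_eq : g a = g b := le_antisymm ha_le (hle_b a ⟨le_rfl, hab⟩)
  intro x hx
  refine le_antisymm ?_ (hab_eq ▸ hle_b x hx)
  have := hg.le_on_segment (mem_univ a) (mem_univ b) (by rwa [segment_eq_Icc hab])
  rwa [← hab_eq, max_self] at this

lemma AffineMap.lineMap_add_right (a u : X) (t : ℝ) : lineMap a (a + u) t = a + t • u := by
  rw [lineMap_apply_module', add_sub_cancel_left, add_comm]

lemma convexOn_norm_add_smul_s12 (a u : X) : ConvexOn ℝ univ (fun t : ℝ ↦ ‖a + t • u‖) := by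
  have hline : (fun t : ℝ ↦ ‖a + t • u‖) = norm ∘ AffineMap.lineMap a (a + u) := by
    ext t
    rw [Function.comp_apply, AffineMap.lineMap_add_right]
  rw [hline]
  exact convexOn_univ_norm.comp_affineMap _

lemma norm_le_norm_add_smul (a u : X) {s : ℝ} (hs : 2 * ‖a‖ ≤ |s| * ‖u‖) :
    ‖a‖ ≤ ‖a + s • u‖ := by
  have h := norm_sub_le (a + s • u) a
  rw [add_sub_cancel_left, norm_smul, Real.norm_eq_abs] at h
  linarith

theorem exists_norm_add_smul_eq_norm_add_add_one_smul (a u : X) (hu : u ≠ 0) :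
    ∃ t : ℝ, ‖a + t • u‖ = ‖a + (t + 1) • u‖ := by
  set g : ℝ → ℝ := fun t ↦ ‖a + t • u‖ with hg
  set T := 2 * ‖a‖ / ‖u‖
  have hT : 0 ≤ T := by positivity
  have hfar : ∀ s, T ≤ |s| → g 0 ≤ g s := fun s hs ↦ by
    simpa [hg] using norm_le_norm_add_smul a u ((div_le_iff₀ (norm_pos_iff.2 hu)).1 hs)
  have hconv := convexOn_norm_add_smul_s12 a u
  have hright : g T ≤ g (T + 1) := by
    have := hconv.le_on_segment (mem_univ 0) (mem_univ (T + 1)) (z := T)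
      (by rw [segment_eq_Icc (by linarith)]; exact ⟨hT, by linarith⟩)
    rwa [max_eq_right (hfar _ (by rw [abs_of_nonneg (by linarith)]; linarith))] at this
  have hleft : g (-T - 1 + 1) ≤ g (-T - 1) := by
    have := hconv.le_on_segment (mem_univ (-T - 1)) (mem_univ 0) (z := -T - 1 + 1)
      (by rw [segment_eq_Icc (by linarith)]; exact ⟨by linarith, by linarith⟩)
    rwa [max_eq_left (hfar _ (by rw [abs_of_neg (by linarith)]; linarith))] at this
  have hcont : Continuous fun t ↦ g t - g (t + 1) := by fun_prop
  obtain ⟨t, -, ht⟩ := intermediate_value_Icc' (by linarith) hcont.continuousOn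
    (⟨by linarith, by linarith⟩ : (0 : ℝ) ∈ Icc (g T - g (T + 1)) (g (-T - 1) - g (-T - 1 + 1)))
  exact ⟨t, sub_eq_zero.1 ht⟩

theorem Module.Dual.exists_smul_eq_of_finrank_eq_two {K V : Type*} [Field K] [AddCommGroup V]
    [Module K V] (hV : finrank K V = 2) {f : Module.Dual K V} (hf : f ≠ 0) {u x : V}
    (hu : u ≠ 0) (hfu : f u = 0) (hfx : f x = 0) : ∃ c : K, c • u = x := by
  have : FiniteDimensional K V := Module.finite_of_finrank_eq_succ hV
  have hker : finrank K (LinearMap.ker f) = 1 := by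
    have := f.finrank_ker_add_one_of_ne_zero hf
    omega
  obtain ⟨c, hc⟩ := (finrank_eq_one_iff_of_nonzero' (⟨u, hfu⟩ : LinearMap.ker f)
    fun h ↦ hu (congrArg Subtype.val h)).1 hker ⟨x, hfx⟩
  exact ⟨c, congrArg Subtype.val hc⟩

variable {p q : X}

lemma add_smul_mem_bisec_iff (z : X) (t : ℝ) :
    z + t • (p - q) ∈ bisec p q ↔ ‖z - p + t • (p - q)‖ = ‖z - p + (t + 1) • (p - q)‖ := by
  rw [bisec, mem_ofPred_eq, show z + t • (p - q) - p = z - p + t • (p - q) by module,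
    show z + t • (p - q) - q = z - p + (t + 1) • (p - q) by module]

theorem exists_add_smul_mem_bisec (hpq : p ≠ q) (z : X) :
    ∃ t : ℝ, z + t • (p - q) ∈ bisec p q := by
  simpa only [add_smul_mem_bisec_iff] using
    exists_norm_add_smul_eq_norm_add_add_one_smul (z - p) (p - q) (sub_ne_zero.2 hpq)

theorem strictPair.eq_of_segment_subset_sphere (hs : strictPair p q) {a b : X} {r t : ℝ}
    (hab : segment ℝ a b ⊆ Metric.sphere 0 r) (ht : b - a = t • (p - q)) : a = b := by
  have ha := hab (left_mem_segment ℝ a b)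
  have hb := hab (right_mem_segment ℝ a b)
  rw [mem_sphere_zero_iff_norm] at ha hb
  rcases eq_or_ne r 0 with rfl | hr0
  · rw [norm_eq_zero.1 ha, norm_eq_zero.1 hb]
  have hr : 0 < r := (ha ▸ norm_nonneg a).lt_of_ne' hr0
  by_contra hne
  refine hs ⟨r⁻¹ • a, r⁻¹ • b, (smul_right_injective X (inv_ne_zero hr0)).ne hne, ?_,
    r⁻¹ * t, by rw [← smul_sub, ht, smul_smul]⟩
  rintro _ ⟨α, β, hα, hβ, hαβ, rfl⟩
  have hx : ‖α • a + β • b‖ = r := mem_sphere_zero_iff_norm.1 (hab ⟨α, β, hα, hβ, hαβ, rfl⟩)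
  rw [mem_ofPred_eq, show α • r⁻¹ • a + β • r⁻¹ • b = r⁻¹ • (α • a + β • b) by module,
    norm_smul, hx, Real.norm_of_nonneg (inv_nonneg.2 hr.le), inv_mul_cancel₀ hr0]

theorem strictPair.eq_of_eqOn_norm_add_smul (hs : strictPair p q) (hpq : p ≠ q) (w : X)
    {r t₁ t₂ : ℝ} (h12 : t₁ ≤ t₂)
    (h : EqOn (fun t : ℝ ↦ ‖w + t • (p - q)‖) (fun _ ↦ r) (Icc t₁ t₂)) : t₁ = t₂ := by
  have hseg : segment ℝ (w + t₁ • (p - q)) (w + t₂ • (p - q)) ⊆ Metric.sphere 0 r := by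
    rw [← AffineMap.lineMap_add_right, ← AffineMap.lineMap_add_right, ← image_segment,
      segment_eq_Icc h12]
    rintro _ ⟨t, ht, rfl⟩
    simpa [AffineMap.lineMap_add_right] using h ht
  have := hs.eq_of_segment_subset_sphere hseg (t := t₂ - t₁)
    (by rw [add_sub_add_left_eq_sub, ← sub_smul])
  exact smul_left_injective ℝ (sub_ne_zero.2 hpq) (add_left_cancel this)

theorem strictPair.eq_of_mem_bisec (hs : strictPair p q) (hpq : p ≠ q) {y z : X}
    (hy : y ∈ bisec p q) (hz : z ∈ bisec p q) {t : ℝ} (h : y - z = t • (p - q)) : y = z := by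
  rw [sub_eq_iff_eq_add'] at h
  subst h
  rw [add_smul_mem_bisec_iff] at hy
  have hz' := (add_smul_mem_bisec_iff z 0).1 (by simpa using hz)
  suffices t = 0 by simp [this]
  have hconv := convexOn_norm_add_smul_s12 (z - p) (p - q)
  rcases le_total 0 t with ht | ht
  · exact (hs.eq_of_eqOn_norm_add_smul hpq _ ht (hconv.eqOn_Icc_of_eq_add ht one_pos hz' hy)).symm
  · exact hs.eq_of_eqOn_norm_add_smul hpq _ ht (hconv.eqOn_Icc_of_eq_add ht one_pos hy hz')

theorem strict_bisector_meets_parallels_once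
    (hdim : Module.finrank ℝ X = 2) (p q : X) (hpq : p ≠ q)
    (hs : strictPair p q)
    (φ : X →L[ℝ] ℝ) (hφ : ‖φ‖ = 1) (hφpq : φ (p - q) = 0) :
    ∀ c : ℝ, ∃! z : X, z ∈ bisec p q ∧ φ (z - p) = c := by
  intro c
  have hφ0 : (φ : Module.Dual ℝ X) ≠ 0 := by
    have : φ ≠ 0 := by rintro rfl; simp at hφ
    simpa using ContinuousLinearMap.coe_injective.ne this
  obtain ⟨v, hv⟩ := LinearMap.surjective hφ0 c
  obtain ⟨t, ht⟩ := exists_add_smul_mem_bisec hpq (v + p)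
  have hφz : φ (v + p + t • (p - q) - p) = c := by
    simpa [add_sub_right_comm _ _ p, hφpq] using hv
  refine ⟨v + p + t • (p - q), ⟨ht, hφz⟩, fun y ⟨hy, hyc⟩ ↦ ?_⟩
  obtain ⟨d, hd⟩ := Module.Dual.exists_smul_eq_of_finrank_eq_two hdim hφ0 (sub_ne_zero.2 hpq)
    hφpq (x := y - (v + p + t • (p - q)))
    (by rw [ContinuousLinearMap.coe_coe, ← sub_sub_sub_cancel_right y _ p, map_sub, hyc, hφz,
      sub_self])
  exact hs.eq_of_mem_bisec hpq hy ht hd.symm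
end
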